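/- arXiv:1502.01255 — 4 statements merged into one kernel-verified Lean document; each statement's English description precedes it below -/
import Mathlib

section
/- Let G be a finite (possibly vertex-colored) simple graph satisfying Conditions A–F: (A) for every cell X ∈ Π_G, G[X] is empty, complete, a matching graph mK_2, the complement of a matching graph, or the 5-cycle; (B) for any two distinct cells X, Y ∈ Π_G, G[X,Y] is empty, complete bipartite, a disjoint union of stars sK_{1,t} (with one of X, Y the centers and the other the leaves), or the bipartite complement of such a graph; (C) C(G) contains no uniform anisotropic path connecting two heterogeneous cells; (D) C(G) contains no uniform anisotropic cycle; (E) C(G) contains neither an anisotropic path X Y_1 … Y_l Z with |X| < |Y_1| = … = |Y_l| > |Z| nor an anisotropic cycle X Y_1 … Y_l X with |X| < |Y_1| = … = |Y_l|; (F) C(G) contains no anisotropic path X Y_1 … Y_l with |X| < |Y_1| = … = |Y_l| and Y_l heterogeneous. Then for any anisotropic component A of C(G): (G) A is a tree, and if A is rooted at any cell R of minimum cardinality in A, then |X| ≤ |Y| for every edge (X,Y) of the rooted tree directed away from R; and (H) A contains at most one heterogeneous cell, and if R is such a cell, it has minimum cardinality among the cells of A. -/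
namespace ColorRef

variable {V W : Type}

/-- `crRel G c i u v` means vertices `u` and `v` get the same color in round `i`
of color refinement on `G` with initial coloring `c`. -/
def crRel (G : SimpleGraph V) {α : Type} (c : V → α) : ℕ → V → V → Prop
  | 0 => fun u v => c u = c v
  | (i + 1) => fun u v => crRel G c i u v ∧
      ∀ w : V, {a : V | G.Adj u a ∧ crRel G c i a w}.ncard =
               {a : V | G.Adj v a ∧ crRel G c i a w}.ncard

/-- `u` and `v` get the same color in the stable coloring. -/
def stableRel (G : SimpleGraph V) {α : Type} (c : V → α) (u v : V) : Prop :=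
  ∀ i : ℕ, crRel G c i u v

/-- `X` is a cell of the stable partition of `(G, c)`. -/
def IsCell (G : SimpleGraph V) {α : Type} (c : V → α) (X : Set V) : Prop :=
  ∃ u : V, X = {v : V | stableRel G c u v}

/-- The multisets of round-`i` colors on the two sides of the disjoint union `G ⊕g H`
coincide for every `i`, i.e. color refinement does not distinguish `G` and `H`. -/
def crIndist (G : SimpleGraph V) (cG : V → ℕ) (H : SimpleGraph W) (cH : W → ℕ) : Prop :=
  ∀ (i : ℕ) (w : V ⊕ W),
    {u : V | crRel (G ⊕g H) (Sum.elim cG cH) i (Sum.inl u) w}.ncard =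
    {v : W | crRel (G ⊕g H) (Sum.elim cG cH) i (Sum.inr v) w}.ncard

/-- `G` (with coloring `cG`) is amenable: any finite colored graph `H` that color
refinement fails to distinguish from `G` is color-preservingly isomorphic to `G`. -/
def Amenable (G : SimpleGraph V) (cG : V → ℕ) : Prop :=
  ∀ (W : Type) (_ : Fintype W) (H : SimpleGraph W) (cH : W → ℕ),
    crIndist G cG H cH → ∃ φ : G ≃g H, ∀ v : V, cH (φ v) = cG v

/-! ### Induced subgraphs on cells and between cells -/

def CellEmpty (G : SimpleGraph V) (X : Set V) : Prop := ∀ u ∈ X, ∀ v ∈ X, ¬ G.Adj u v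

def CellComplete (G : SimpleGraph V) (X : Set V) : Prop :=
  ∀ u ∈ X, ∀ v ∈ X, u ≠ v → G.Adj u v

/-- `G[X]` is a perfect matching `mK₂` on `X`. -/
def CellMatching (G : SimpleGraph V) (X : Set V) : Prop :=
  ∀ u ∈ X, {v : V | v ∈ X ∧ G.Adj u v}.ncard = 1

/-- `G[X]` is the complement of a perfect matching on `X`. -/
def CellCoMatching (G : SimpleGraph V) (X : Set V) : Prop :=
  ∀ u ∈ X, {v : V | v ∈ X ∧ v ≠ u ∧ ¬ G.Adj u v}.ncard = 1

/-- `G[X]` is the 5-cycle (a 2-regular graph on 5 vertices). -/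
def CellC5 (G : SimpleGraph V) (X : Set V) : Prop :=
  X.ncard = 5 ∧ ∀ u ∈ X, {v : V | v ∈ X ∧ G.Adj u v}.ncard = 2

/-- Condition A. -/
def CondA (G : SimpleGraph V) {α : Type} (c : V → α) : Prop :=
  ∀ X : Set V, IsCell G c X →
    CellEmpty G X ∨ CellComplete G X ∨ CellMatching G X ∨ CellCoMatching G X ∨ CellC5 G X

def BipEmpty (G : SimpleGraph V) (X Y : Set V) : Prop := ∀ u ∈ X, ∀ v ∈ Y, ¬ G.Adj u v

def BipComplete (G : SimpleGraph V) (X Y : Set V) : Prop := ∀ u ∈ X, ∀ v ∈ Y, G.Adj u v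

/-- `G[X,Y]` is a disjoint union of stars `sK_{1,t}` with centers `X` and leaves `Y`. -/
def BipStars (G : SimpleGraph V) (X Y : Set V) : Prop :=
  (∀ v ∈ Y, {u : V | u ∈ X ∧ G.Adj u v}.ncard = 1) ∧
  (∃ t : ℕ, ∀ u ∈ X, {v : V | v ∈ Y ∧ G.Adj u v}.ncard = t)

/-- `G[X,Y]` is the bipartite complement of a disjoint union of stars with centers `X`. -/
def BipCoStars (G : SimpleGraph V) (X Y : Set V) : Prop :=
  (∀ v ∈ Y, {u : V | u ∈ X ∧ ¬ G.Adj u v}.ncard = 1) ∧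
  (∃ t : ℕ, ∀ u ∈ X, {v : V | v ∈ Y ∧ ¬ G.Adj u v}.ncard = t)

/-- Condition B. -/
def CondB (G : SimpleGraph V) {α : Type} (c : V → α) : Prop :=
  ∀ X Y : Set V, IsCell G c X → IsCell G c Y → X ≠ Y →
    BipEmpty G X Y ∨ BipComplete G X Y ∨
    BipStars G X Y ∨ BipStars G Y X ∨ BipCoStars G X Y ∨ BipCoStars G Y X

/-- A cell is heterogeneous if the graph it induces is neither complete nor empty. -/
def Hetero (G : SimpleGraph V) (X : Set V) : Prop :=
  ¬ CellEmpty G X ∧ ¬ CellComplete G X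

/-- `{X, Y}` is an anisotropic edge of the cell graph. -/
def AnisoEdge (G : SimpleGraph V) {α : Type} (c : V → α) (X Y : Set V) : Prop :=
  IsCell G c X ∧ IsCell G c Y ∧ X ≠ Y ∧ ¬ BipEmpty G X Y ∧ ¬ BipComplete G X Y

/-- An anisotropic path in the cell graph, given as the list of its cells. -/
def AnisoPath (G : SimpleGraph V) {α : Type} (c : V → α) (L : List (Set V)) : Prop :=
  (∀ X ∈ L, IsCell G c X) ∧ L.Nodup ∧ L.Chain' (AnisoEdge G c)

/-- Condition C: no uniform anisotropic path connects two heterogeneous cells. -/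
def CondC (G : SimpleGraph V) {α : Type} (c : V → α) : Prop :=
  ¬ ∃ (X Y : Set V) (L : List (Set V)) (k : ℕ),
      AnisoPath G c (X :: (L ++ [Y])) ∧
      (∀ Z ∈ X :: (L ++ [Y]), Z.ncard = k) ∧
      Hetero G X ∧ Hetero G Y

/-- Condition D: the cell graph has no uniform anisotropic cycle. -/
def CondD (G : SimpleGraph V) {α : Type} (c : V → α) : Prop :=
  ¬ ∃ (X : Set V) (L : List (Set V)) (k : ℕ),
      3 ≤ (X :: L).length ∧
      AnisoPath G c (X :: L) ∧
      List.Chain' (AnisoEdge G c) ((X :: L) ++ [X]) ∧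
      (∀ Z ∈ X :: L, Z.ncard = k)

/-- Condition E: no anisotropic path `X Y₁ … Y_l Z` with `|X| < |Y₁| = … = |Y_l| > |Z|`
and no anisotropic cycle `X Y₁ … Y_l X` with `|X| < |Y₁| = … = |Y_l|`. -/
def CondE (G : SimpleGraph V) {α : Type} (c : V → α) : Prop :=
  (¬ ∃ (X Z : Set V) (Ys : List (Set V)) (k : ℕ),
      Ys ≠ [] ∧
      AnisoPath G c (X :: (Ys ++ [Z])) ∧
      (∀ Y ∈ Ys, Y.ncard = k) ∧ X.ncard < k ∧ Z.ncard < k) ∧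
  (¬ ∃ (X : Set V) (Ys : List (Set V)) (k : ℕ),
      2 ≤ Ys.length ∧
      AnisoPath G c (X :: Ys) ∧
      List.Chain' (AnisoEdge G c) ((X :: Ys) ++ [X]) ∧
      (∀ Y ∈ Ys, Y.ncard = k) ∧ X.ncard < k)

/-- Condition F: no anisotropic path `X Y₁ … Y_l` with `|X| < |Y₁| = … = |Y_l|`
whose last cell `Y_l` is heterogeneous. -/
def CondF (G : SimpleGraph V) {α : Type} (c : V → α) : Prop :=
  ¬ ∃ (X : Set V) (Ys : List (Set V)) (Yl : Set V) (k : ℕ),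
      Ys ≠ [] ∧
      AnisoPath G c (X :: Ys) ∧
      (∀ Y ∈ Ys, Y.ncard = k) ∧ X.ncard < k ∧
      Ys.getLast? = some Yl ∧ Hetero G Yl

/-- The type of cells of the stable partition. -/
def Cell (G : SimpleGraph V) {α : Type} (c : V → α) : Type := {X : Set V // IsCell G c X}

/-- The graph on the cells of `Π_G` formed by the anisotropic edges of the cell graph;
its connected components are the anisotropic components of `C(G)`. -/
def anisoGraph (G : SimpleGraph V) {α : Type} (c : V → α) : SimpleGraph (Cell G c) where
  Adj A B := AnisoEdge G c A.val B.val
  symm := by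
    constructor
    rintro A B ⟨h1, h2, h3, h4, h5⟩
    refine ⟨h2, h1, Ne.symm h3, fun h => h4 ?_, fun h => h5 ?_⟩
    · exact fun u hu v hv hadj => h v hv u hu hadj.symm
    · exact fun u hu v hv => (h v hv u hu).symm
  loopless := ⟨fun A h => h.2.2.1 rfl⟩

/-- Condition G: every anisotropic component is a tree, and rooting it at any cell `R`
of minimum cardinality in its component, `|X| ≤ |Y|` along edges directed away from `R`. -/
def CondG (G : SimpleGraph V) {α : Type} (c : V → α) : Prop :=
  (anisoGraph G c).IsAcyclic ∧
  ∀ R X Y : Cell G c,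
    (∀ Z : Cell G c, (anisoGraph G c).Reachable R Z → R.val.ncard ≤ Z.val.ncard) →
    (anisoGraph G c).Reachable R X →
    (anisoGraph G c).Adj X Y →
    (anisoGraph G c).dist R Y = (anisoGraph G c).dist R X + 1 →
    X.val.ncard ≤ Y.val.ncard

/-- Condition H: every anisotropic component contains at most one heterogeneous cell,
and such a cell has minimum cardinality within its component. -/
def CondH (G : SimpleGraph V) {α : Type} (c : V → α) : Prop :=
  (∀ X Y : Cell G c, Hetero G X.val → Hetero G Y.val →
      (anisoGraph G c).Reachable X Y → X = Y) ∧
  (∀ X Z : Cell G c, Hetero G X.val →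
      (anisoGraph G c).Reachable X Z → X.val.ncard ≤ Z.val.ncard)

/-! ### Matrices, fractional automorphisms and compactness -/

open Classical in
/-- The real adjacency matrix of `G`. -/
noncomputable def adjMat (G : SimpleGraph V) : Matrix V V ℝ :=
  Matrix.of fun u v => if G.Adj u v then (1 : ℝ) else 0

open Classical in
/-- The permutation matrix of a permutation `σ`. -/
noncomputable def permMat (σ : Equiv.Perm V) : Matrix V V ℝ :=
  Matrix.of fun i j => if σ j = i then (1 : ℝ) else 0

def IsDoublyStochastic [Fintype V] (X : Matrix V V ℝ) : Prop :=
  (∀ i j, 0 ≤ X i j) ∧ (∀ i, ∑ j, X i j = 1) ∧ (∀ j, ∑ i, X i j = 1)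

def IsAutomorphism (G : SimpleGraph V) (σ : Equiv.Perm V) : Prop :=
  ∀ u v : V, G.Adj (σ u) (σ v) ↔ G.Adj u v

/-- `X` is a convex combination of permutation matrices of automorphisms of `G`. -/
def IsConvexCombOfAut [Fintype V] (G : SimpleGraph V) (X : Matrix V V ℝ) : Prop :=
  ∃ (s : Finset (Equiv.Perm V)) (w : Equiv.Perm V → ℝ),
    (∀ σ ∈ s, IsAutomorphism G σ) ∧ (∀ σ ∈ s, 0 ≤ w σ) ∧
    (∑ σ ∈ s, w σ) = 1 ∧ X = ∑ σ ∈ s, w σ • permMat σ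

/-- `G` is compact: the polytope of fractional automorphisms of `G` is the convex hull
of the permutation matrices of automorphisms of `G`. -/
def CompactGraph [Fintype V] (G : SimpleGraph V) : Prop :=
  ∀ X : Matrix V V ℝ, IsDoublyStochastic X → adjMat G * X = X * adjMat G →
    IsConvexCombOfAut G X

/-! ### Equitable partitions, Godsil, Tinhofer, refinable, discrete, unigraphs -/

/-- The partition given by the classes of the equivalence `r` is equitable. -/
def Equitable (G : SimpleGraph V) (r : V → V → Prop) : Prop :=
  ∀ u v w : V, r u v →
    {a : V | G.Adj u a ∧ r a w}.ncard = {a : V | G.Adj v a ∧ r a w}.ncard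

/-- The partition given by `r` is the orbit partition of a subgroup of `Aut(G)`. -/
def IsOrbitPartition (G : SimpleGraph V) (r : V → V → Prop) : Prop :=
  ∃ S : Subgroup (Equiv.Perm V), (∀ σ ∈ S, IsAutomorphism G σ) ∧
    (∀ u v : V, r u v ↔ ∃ σ ∈ S, σ u = v)

/-- `G` is a Godsil graph. -/
def Godsil (G : SimpleGraph V) : Prop :=
  ∀ r : V → V → Prop, Equivalence r → Equitable G r → IsOrbitPartition G r

open Classical in
/-- The coloring of the disjoint union after individualizing the pairs in `F`:
the `j`-th individualized pair gets fresh color `some j`, all other vertices keep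
their (uniform) original color `none`. -/
noncomputable def tinColor (F : List (V × W)) : V ⊕ W → Option ℕ
  | Sum.inl u => F.findIdx? (fun p => decide (p.1 = u))
  | Sum.inr v => F.findIdx? (fun p => decide (p.2 = v))

/-- The stable coloring relation on `G ⊕g H` after individualizing the pairs in `F`. -/
def tinRel (G : SimpleGraph V) (H : SimpleGraph W) (F : List (V × W)) :
    (V ⊕ W) → (V ⊕ W) → Prop :=
  stableRel (G ⊕g H) (tinColor F)

/-- The multisets of stable colors on the two sides agree after individualizing `F`. -/
def tinIndist (G : SimpleGraph V) (H : SimpleGraph W) (F : List (V × W)) : Prop :=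
  ∀ w : V ⊕ W,
    {u : V | tinRel G H F (Sum.inl u) w}.ncard =
    {v : W | tinRel G H F (Sum.inr v) w}.ncard

/-- The pair `p` is a legal individualization choice at the stage reached after `F`. -/
def ValidStep (G : SimpleGraph V) (H : SimpleGraph W) (F : List (V × W)) (p : V × W) : Prop :=
  tinIndist G H F ∧
  tinRel G H F (Sum.inl p.1) (Sum.inr p.2) ∧
  2 ≤ {u' : V | tinRel G H F (Sum.inl u') (Sum.inl p.1)}.ncard ∧
  2 ≤ {v' : W | tinRel G H F (Sum.inr v') (Sum.inr p.2)}.ncard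

/-- `F` is a legal sequence of individualization choices of Tinhofer's algorithm. -/
def ValidRun (G : SimpleGraph V) (H : SimpleGraph W) (F : List (V × W)) : Prop :=
  ∀ j : Fin F.length, ValidStep G H (F.take j.val) (F.get j)

/-- After `F`, all stable color classes are singletons in `G` and in `H`. -/
def AllSingletons (G : SimpleGraph V) (H : SimpleGraph W) (F : List (V × W)) : Prop :=
  (∀ u u' : V, tinRel G H F (Sum.inl u) (Sum.inl u') → u = u') ∧
  (∀ v v' : W, tinRel G H F (Sum.inr v) (Sum.inr v') → v = v')

/-- After `F`, Tinhofer's algorithm stops. -/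
def TinTerminal (G : SimpleGraph V) (H : SimpleGraph W) (F : List (V × W)) : Prop :=
  ¬ tinIndist G H F ∨ AllSingletons G H F

/-- After `F`, Tinhofer's algorithm outputs "isomorphic": the color multisets agree,
all classes are singletons, and the color-matching map is an isomorphism. -/
def TinOutputIso (G : SimpleGraph V) (H : SimpleGraph W) (F : List (V × W)) : Prop :=
  tinIndist G H F ∧ AllSingletons G H F ∧
  (∀ (u u' : V) (v v' : W), tinRel G H F (Sum.inl u) (Sum.inr v) →
     tinRel G H F (Sum.inl u') (Sum.inr v') → (G.Adj u u' ↔ H.Adj v v'))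

/-- `G` is a Tinhofer graph: for every finite `H` and every legal complete run of
Tinhofer's individualization-refinement algorithm, the output is correct. -/
def Tinhofer (G : SimpleGraph V) : Prop :=
  ∀ (W : Type) (_ : Fintype W) (H : SimpleGraph W) (F : List (V × W)),
    ValidRun G H F → TinTerminal G H F →
    (TinOutputIso G H F ↔ Nonempty (G ≃g H))

/-- `G` is refinable: its stable partition is the orbit partition of `Aut(G)`. -/
def Refinable (G : SimpleGraph V) : Prop :=
  ∀ u v : V, stableRel G (fun _ => (0 : ℕ)) u v ↔
    ∃ σ : Equiv.Perm V, IsAutomorphism G σ ∧ σ u = v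

/-- `G` is discrete: the stable partition consists of singletons. -/
def Discrete (G : SimpleGraph V) : Prop :=
  ∀ u v : V, stableRel G (fun _ => (0 : ℕ)) u v → u = v

/-- `G` is a unigraph: it is determined up to isomorphism by its degree sequence. -/
def Unigraph (G : SimpleGraph V) : Prop :=
  ∀ (W : Type) (_ : Fintype W) (H : SimpleGraph W),
    (∃ e : V ≃ W, ∀ v : V, {w : W | H.Adj (e v) w}.ncard = {u : V | G.Adj v u}.ncard) →
    Nonempty (G ≃g H)

/-! ### Concrete graphs -/

/-- The cycle graph on `n` vertices. -/
def cycleG (n : ℕ) : SimpleGraph (Fin n) :=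
  SimpleGraph.fromRel (fun u v => (u.val + 1) % n = v.val)

/-- The Petersen graph as the Kneser graph `K(5,2)`. -/
def petersen : SimpleGraph {s : Finset (Fin 5) // s.card = 2} where
  Adj a b := Disjoint a.val b.val
  symm := ⟨fun _ _ h => h.symm⟩
  loopless := by
    constructor
    intro a h
    have h' : Disjoint a.val a.val := h
    rw [disjoint_self] at h'
    have h2 := a.2
    rw [h'] at h2
    simp at h2

/-- The Johnson graph `J(n,2)`. -/
def johnson (n : ℕ) : SimpleGraph {s : Finset (Fin n) // s.card = 2} where
  Adj a b := (a.val ∩ b.val).card = 1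
  symm := by
    constructor
    intro a b h
    have h' : (a.val ∩ b.val).card = 1 := h
    show (b.val ∩ a.val).card = 1
    rwa [Finset.inter_comm]
  loopless := by
    constructor
    intro a h
    have h' : (a.val ∩ a.val).card = 1 := h
    rw [Finset.inter_self, a.2] at h'
    omega

/-- The cell (as an element of the cell type) containing vertex `u`. -/
def vcell (G : SimpleGraph V) {α : Type} (c : V → α) (u : V) : Cell G c :=
  ⟨{v : V | stableRel G c u v}, ⟨u, rfl⟩⟩

/-- `u` and `v` lie in cells of the same anisotropic component. -/
def SameAnisoComp (G : SimpleGraph V) {α : Type} (c : V → α) (u v : V) : Prop :=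
  (anisoGraph G c).Reachable (vcell G c u) (vcell G c v)

/-!
Condition E forces the sizes along an anisotropic path to be unimodal in a strong sense: if the
first cell is smaller than the largest one, of size `k`, then once the path reaches size `k` it
stays on that plateau up to its last cell (a descent would give the forbidden path `X Y₁ … Y_l Z`).

* A cycle of anisotropic edges is uniform, which D forbids, or can be rotated to start below the
  maximal size; it then climbs onto its top plateau and must come down again to close up, which E
  forbids.
* If a path from `Z` ends at a heterogeneous cell larger than `Z`, that cell ends a plateau reached
  by an ascent, which F forbids; so heterogeneous cells are minimal in their component. Two distinct
  heterogeneous cells `X`, `Y` of one component then have equal, minimal size, and the path between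
  them cannot exceed it (it would end on its plateau), so it is uniform, which C forbids.
* For a tree edge `X Y` directed away from a minimal root `R` with `|Y| < |X|`, the path
  `Y X … R` climbs above `|Y|`, so `R` ends the top plateau and `|R| ≥ |X| > |Y|`, contradicting
  the minimality of `R`.
-/

section AnisotropicPaths

open List

variable {α : Type} {G : SimpleGraph V} {c : V → α}

lemma AnisoPath.infix {L L' : List (Set V)} (h : AnisoPath G c L) (h' : L' <:+: L) :
    AnisoPath G c L' :=
  ⟨fun X hX => h.1 X (h'.subset hX), h.2.1.sublist h'.sublist, IsChain.infix h.2.2 h'⟩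

lemma exists_mem_forall_ncard_le {L : List (Set V)} (hL : L ≠ []) :
    ∃ M ∈ L, ∀ Z ∈ L, Z.ncard ≤ M.ncard :=
  Set.exists_max_image {Z | Z ∈ L} Set.ncard L.finite_toSet
    (exists_mem_of_ne_nil L hL)

theorem CondE.ncard_eq_of_plateau (hE : CondE G c) {a : Set V} {k : ℕ} :
    ∀ {ys rest : List (Set V)}, AnisoPath G c (a :: (ys ++ rest)) → a.ncard < k → ys ≠ [] →
      (∀ Y ∈ ys, Y.ncard = k) → (∀ Z ∈ rest, Z.ncard ≤ k) → ∀ Z ∈ rest, Z.ncard = k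
  | _, [], _, _, _, _, _ => by simp
  | ys, b :: rest, hP, ha, hys, hysk, hle => by
    have hb : b.ncard = k := (hle b mem_cons_self).eq_of_not_lt fun hb =>
      hE.1 ⟨a, b, ys, k, hys, hP.infix ⟨[], rest, by simp⟩, hysk, ha, hb⟩
    have hrest := hE.ncard_eq_of_plateau (ys := ys ++ [b]) (rest := rest) (by simpa using hP) ha
      (by simp) (by simpa [or_imp, forall_and, hb] using hysk)
      fun Z hZ => hle Z (mem_cons_of_mem _ hZ)
    simpa [hb] using hrest

theorem CondE.exists_final_plateau (hE : CondE G c) {k : ℕ} :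
    ∀ {A : Set V} {T : List (Set V)}, AnisoPath G c (A :: T) → A.ncard < k →
      (∀ Z ∈ A :: T, Z.ncard ≤ k) → (∃ Z ∈ A :: T, Z.ncard = k) →
      ∃ pre a ys, A :: T = pre ++ a :: ys ∧ a.ncard < k ∧ ys ≠ [] ∧ ∀ Y ∈ ys, Y.ncard = k
  | _, [], _, hA, _, ⟨_, hZ, hZk⟩ => by simp_all
  | A, B :: T, hP, hA, hle, ⟨Z, hZ, hZk⟩ => by
    by_cases hB : B.ncard = k
    · have hT := hE.ncard_eq_of_plateau (ys := [B]) (rest := T) hP hA (by simp) (by simpa)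
        fun Z hZ => hle Z (by simp [hZ])
      exact ⟨[], A, B :: T, rfl, hA, cons_ne_nil _ _, by simpa [hB] using hT⟩
    · have hZ' : Z ∈ B :: T := (mem_cons.mp hZ).resolve_left (by rintro rfl; omega)
      obtain ⟨pre, a, ys, h, rest⟩ := hE.exists_final_plateau (hP.infix (suffix_cons A _).isInfix)
        ((hle B (by simp)).lt_of_ne hB) (fun Z hZ => hle Z (mem_cons_of_mem _ hZ)) ⟨Z, hZ', hZk⟩
      exact ⟨A :: pre, a, ys, by rw [h]; rfl, rest⟩

theorem CondE.ncard_getLast?_eq (hE : CondE G c) {A B : Set V} {T : List (Set V)} {k : ℕ}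
    (hP : AnisoPath G c (A :: T)) (hA : A.ncard < k) (hle : ∀ Z ∈ A :: T, Z.ncard ≤ k)
    (hk : ∃ Z ∈ A :: T, Z.ncard = k) (hB : (A :: T).getLast? = some B) : B.ncard = k := by
  obtain ⟨pre, a, ys, h, -, hys, hysk⟩ := hE.exists_final_plateau hP hA hle hk
  rw [h, getLast?_append_cons, getLast?_cons_of_ne_nil hys] at hB
  exact hysk B (mem_of_getLast? hB)

theorem ncard_le_of_getLast?_hetero (hE : CondE G c) (hF : CondF G c) {A B : Set V}
    {T : List (Set V)} (hP : AnisoPath G c (A :: T)) (hB : (A :: T).getLast? = some B)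
    (hBh : Hetero G B) : B.ncard ≤ A.ncard := by
  by_contra! hlt
  obtain ⟨M, hM, hmax⟩ := exists_mem_forall_ncard_le (cons_ne_nil A T)
  obtain ⟨pre, a, ys, h, ha, hys, hysk⟩ := hE.exists_final_plateau hP
    (hlt.trans_le (hmax B (mem_of_getLast? hB))) hmax ⟨M, hM, rfl⟩
  refine hF ⟨a, ys, B, M.ncard, hys, hP.infix ⟨pre, [], by simp [h]⟩, hysk, ha, ?_, hBh⟩
  rwa [h, getLast?_append_cons, getLast?_cons_of_ne_nil hys] at hB

theorem CondE.false_of_cycle (hE : CondE G c) {A : Set V} {T : List (Set V)} {k : ℕ}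
    (hP : AnisoPath G c (A :: T)) (hcyc : IsChain (AnisoEdge G c) (A :: T ++ [A]))
    (hT : 2 ≤ T.length) (hA : A.ncard < k) (hle : ∀ Z ∈ A :: T, Z.ncard ≤ k)
    (hk : ∃ Z ∈ A :: T, Z.ncard = k) : False := by
  obtain ⟨pre, a, ys, h, ha, hys, hysk⟩ := hE.exists_final_plateau hP hA hle hk
  rcases pre with _ | ⟨B, pre⟩
  · obtain ⟨rfl, rfl⟩ := cons_eq_cons.mp h
    exact hE.2 ⟨A, T, k, hT, hP, hcyc, hysk, hA⟩
  · obtain ⟨rfl, rfl⟩ : A = B ∧ T = pre ++ a :: ys := by simpa using h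
    have hnd : (A :: (pre ++ a :: ys)).Nodup := hP.2.1
    refine hE.1 ⟨a, A, ys, k, hys, ⟨fun Z hZ => hP.1 Z ?_, ?_, hcyc.infix ⟨A :: pre, [], by simp⟩⟩,
      hysk, ha, hA⟩
    · simp only [mem_cons, mem_append] at hZ ⊢
      tauto
    · simp only [nodup_cons, nodup_append, mem_append, mem_cons] at hnd ⊢
      grind

end AnisotropicPaths

section AnisotropicGraph

open SimpleGraph List

variable {α : Type} {G : SimpleGraph V} {c : V → α}

-- `Cell` is a plain `def`, so lists mapped by `Subtype.val` have the wrong element type for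
-- rewriting with the `List.map` lemmas; this is the same map with domain `Cell G c`.
abbrev Cell.toSet (X : Cell G c) : Set V := X.val

lemma isChain_map_toSet_support {A B : Cell G c} (p : (anisoGraph G c).Walk A B) :
    IsChain (AnisoEdge G c) (p.support.map Cell.toSet) :=
  (isChain_map _).mpr p.isChain_adj_support

lemma anisoPath_map_toSet_support {A B : Cell G c} {p : (anisoGraph G c).Walk A B}
    (hp : p.IsPath) : AnisoPath G c (p.support.map Cell.toSet) := by
  refine ⟨?_, hp.support_nodup.map Subtype.val_injective, isChain_map_toSet_support p⟩
  simp only [mem_map]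
  rintro _ ⟨Z, -, rfl⟩
  exact Z.2

lemma getLast?_map_toSet_support {A B : Cell G c} (p : (anisoGraph G c).Walk A B) :
    (p.support.map Cell.toSet).getLast? = some B.val := by
  rw [getLast?_map, getLast?_eq_some_getLast p.support_ne_nil, p.getLast_support]
  rfl

lemma map_toSet_support_cons {u v w : Cell G c} (h : (anisoGraph G c).Adj u v)
    (p : (anisoGraph G c).Walk v w) :
    (Walk.cons h p).support.map Cell.toSet =
      u.val :: (p.support.dropLast.map Cell.toSet ++ [w.val]) := by
  conv_lhs => rw [Walk.support_cons, ← p.dropLast_support_concat]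
  simp only [map_cons, map_append, map_nil]

lemma exists_anisoCycle_of_isCycle {u : Cell G c} {q : (anisoGraph G c).Walk u u}
    (hq : q.IsCycle) :
    ∃ T, AnisoPath G c (u.val :: T) ∧ IsChain (AnisoEdge G c) (u.val :: T ++ [u.val]) ∧
      2 ≤ T.length ∧ ∀ Z, Z ∈ u.val :: T ↔ Z ∈ q.support.map Cell.toSet := by
  cases q with
  | nil => exact absurd rfl hq.ne_nil
  | cons h p =>
    have hsupp := map_toSet_support_cons h p
    have hchain := isChain_map_toSet_support (Walk.cons h p)
    rw [hsupp] at hchain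
    have hnd : (u :: p.support.dropLast).Nodup := by
      simpa [dropLast_cons_of_ne_nil p.support_ne_nil] using hq.nodup_dropLast_support
    have hlen : 3 ≤ (Walk.cons h p).length := hq.isCircuit.three_le_length
    refine ⟨p.support.dropLast.map Cell.toSet,
      ⟨?_, hnd.map (f := Cell.toSet) Subtype.val_injective, hchain.infix ⟨[], [u.val], by simp⟩⟩,
      hchain, ?_, fun Z => ?_⟩
    · simp only [mem_cons, mem_map]
      rintro _ (rfl | ⟨Z, -, rfl⟩)
      exacts [u.2, Z.2]
    · simp only [Walk.length_cons, length_map, length_dropLast, Walk.length_support] at hlen ⊢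
      omega
    · rw [hsupp]
      simp only [mem_cons, mem_append]
      tauto

theorem anisoGraph_isAcyclic (hD : CondD G c) (hE : CondE G c) : (anisoGraph G c).IsAcyclic := by
  classical
  intro A q hq
  obtain ⟨M, hM, hmax⟩ :=
    exists_mem_forall_ncard_le (L := q.support.map Cell.toSet) (by simp)
  by_cases huniform : ∀ Z ∈ q.support.map Cell.toSet, Z.ncard = M.ncard
  · obtain ⟨T, hP, hcyc, hT, hmem⟩ := exists_anisoCycle_of_isCycle hq
    exact hD ⟨A.val, T, M.ncard, by simpa using hT, hP, hcyc,
      fun Z hZ => huniform Z ((hmem Z).1 hZ)⟩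
  · push Not at huniform
    obtain ⟨_, hw', hlt⟩ := huniform
    obtain ⟨w, hw, rfl⟩ := mem_map.mp hw'
    obtain ⟨T, hP, hcyc, hT, hmem⟩ := exists_anisoCycle_of_isCycle (hq.rotate hw)
    have hmem' : ∀ Z, Z ∈ w.val :: T ↔ Z ∈ q.support.map Cell.toSet := by
      simp [hmem, Walk.mem_support_rotate_iff]
    exact hE.false_of_cycle hP hcyc hT ((hmax _ hw').lt_of_ne hlt)
      (fun Z hZ => hmax Z ((hmem' Z).1 hZ)) ⟨M, (hmem' M).2 hM, rfl⟩

theorem ncard_le_ncard_of_dist_eq_succ (hE : CondE G c) {R X Y : Cell G c}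
    (hmin : ∀ Z, (anisoGraph G c).Reachable R Z → R.val.ncard ≤ Z.val.ncard)
    (hRX : (anisoGraph G c).Reachable R X) (hXY : (anisoGraph G c).Adj X Y)
    (hdist : (anisoGraph G c).dist R Y = (anisoGraph G c).dist R X + 1) :
    X.val.ncard ≤ Y.val.ncard := by
  classical
  by_contra! hlt
  obtain ⟨p, hp, hplen⟩ := hRX.exists_path_of_dist
  have hY : Y ∉ p.support := fun hY => by
    have := (anisoGraph G c).dist_le (p.takeUntil Y hY)
    have := p.length_takeUntil_le_length hY
    omega
  let q : (anisoGraph G c).Walk Y R := .cons hXY.symm p.reverse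
  have hP : AnisoPath G c (q.support.map Cell.toSet) :=
    anisoPath_map_toSet_support (by simp [q, Walk.cons_isPath_iff, hp.reverse, hY])
  obtain ⟨M, hM, hmax⟩ := exists_mem_forall_ncard_le (L := q.support.map Cell.toSet) (by simp)
  have hXM : X.val.ncard ≤ M.ncard := hmax X.val (mem_map_of_mem (by simp [q]))
  have hRM := hE.ncard_getLast?_eq hP (hlt.trans_le hXM) hmax ⟨M, hM, rfl⟩
    (getLast?_map_toSet_support q)
  have hRY := hmin Y (hRX.trans hXY.reachable)
  omega

theorem ncard_le_of_hetero_of_reachable (hE : CondE G c) (hF : CondF G c) {X Z : Cell G c}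
    (hX : Hetero G X.val) (h : (anisoGraph G c).Reachable X Z) : X.val.ncard ≤ Z.val.ncard := by
  obtain ⟨p, hp⟩ := h.symm.exists_isPath
  have hP := anisoPath_map_toSet_support hp
  have hlast := getLast?_map_toSet_support p
  rw [← p.cons_tail_support, map_cons] at hP hlast
  exact ncard_le_of_getLast?_hetero hE hF hP hlast hX

theorem eq_of_hetero_of_reachable (hC : CondC G c) (hE : CondE G c) (hF : CondF G c)
    {X Y : Cell G c} (hX : Hetero G X.val) (hY : Hetero G Y.val)
    (h : (anisoGraph G c).Reachable X Y) : X = Y := by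
  classical
  by_contra hne
  obtain ⟨p, hp⟩ := h.exists_isPath
  have hP := anisoPath_map_toSet_support hp
  have hXY : Y.val.ncard = X.val.ncard :=
    (ncard_le_of_hetero_of_reachable hE hF hY h.symm).antisymm
      (ncard_le_of_hetero_of_reachable hE hF hX h)
  have hge : ∀ Z ∈ p.support.map Cell.toSet, X.val.ncard ≤ Z.ncard := by
    simp only [mem_map]
    rintro _ ⟨W, hW, rfl⟩
    exact ncard_le_of_hetero_of_reachable hE hF hX (p.takeUntil W hW).reachable
  obtain ⟨M, hM, hmax⟩ := exists_mem_forall_ncard_le (L := p.support.map Cell.toSet) (by simp)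
  cases p with
  | nil => exact hne rfl
  | cons hadj q =>
    have hMX : M.ncard ≤ X.val.ncard := by
      by_contra! hlt
      have hYM := hE.ncard_getLast?_eq hP hlt hmax ⟨M, hM, rfl⟩
        (getLast?_map_toSet_support (.cons hadj q))
      omega
    rw [map_toSet_support_cons] at hP hge hmax
    exact hC ⟨X.val, Y.val, _, X.val.ncard, hP,
      fun Z hZ => ((hmax Z hZ).trans hMX).antisymm (hge Z hZ), hX, hY⟩

end AnisotropicGraph

theorem condAF_implies_condGH_general {V : Type} (G : SimpleGraph V) (c : V → ℕ)
    (hC : CondC G c) (hD : CondD G c)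
    (hE : CondE G c) (hF : CondF G c) : CondG G c ∧ CondH G c :=
  ⟨⟨anisoGraph_isAcyclic hD hE, fun _ _ _ => ncard_le_ncard_of_dist_eq_succ hE⟩,
    fun _ _ => eq_of_hetero_of_reachable hC hE hF,
    fun _ _ => ncard_le_of_hetero_of_reachable hE hF⟩

theorem condAF_implies_condGH {V : Type} [Fintype V] (G : SimpleGraph V) (c : V → ℕ)
    (hA : CondA G c) (hB : CondB G c) (hC : CondC G c) (hD : CondD G c)
    (hE : CondE G c) (hF : CondF G c) : CondG G c ∧ CondH G c :=
  condAF_implies_condGH_general G c hC hD hE hF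

end ColorRef
end

section
/- Let X be a cell of the stable partition of a finite (possibly vertex-colored) simple graph G, and suppose the induced subgraph G[X] is d-regular. If H is obtained from G by replacing the edges of G[X] with the edges of an arbitrary d-regular graph on the vertex set X (leaving all other edges of G unchanged), then C^i_G(u) = C^i_H(u) for every vertex u ∈ V(G) and every i ≥ 0, where C^i_G and C^i_H denote the color-refinement colorings computed in G and in H respectively. -/
namespace ColorRef

variable {V W : Type}

/- The colorings of `G` and of `H` agree round by round because every vertex has, in each
color class of `G`, as many `G`-neighbours as `H`-neighbours. Away from `X` the neighbourhoods
coincide; inside `X` only the number of neighbours in `X` changes, and that number is `d` in both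
graphs. Since `X` is a stable cell it lies in a single color class of every round, so the
neighbours in `X` either all count or all do not. -/

section CrRel

variable {α : Type} (G : SimpleGraph V) (c : V → α)

lemma crRel_refl : ∀ (i : ℕ) (u : V), crRel G c i u u
  | 0, _ => rfl
  | i + 1, u => ⟨crRel_refl i u, fun _ => rfl⟩

variable {G c}

lemma crRel_symm : ∀ {i : ℕ} {u v : V}, crRel G c i u v → crRel G c i v u
  | 0, _, _, h => h.symm
  | _ + 1, _, _, h => ⟨crRel_symm h.1, fun w => (h.2 w).symm⟩

lemma crRel_trans : ∀ {i : ℕ} {u v w : V}, crRel G c i u v → crRel G c i v w → crRel G c i u w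
  | 0, _, _, _, h, h' => h.trans h'
  | _ + 1, _, _, _, h, h' => ⟨crRel_trans h.1 h'.1, fun x => (h.2 x).trans (h'.2 x)⟩

lemma IsCell.crRel_of_mem {X : Set V} (hX : IsCell G c X) {u v : V} (hu : u ∈ X) (hv : v ∈ X)
    (i : ℕ) : crRel G c i u v := by
  obtain ⟨w, rfl⟩ := hX
  exact crRel_trans (crRel_symm (hu i)) (hv i)

end CrRel

lemma ncard_adj_eq_of_regular_surgery [Finite V] {G H : SimpleGraph V} {X : Set V} {d : ℕ}
    (hGreg : ∀ u ∈ X, {v : V | v ∈ X ∧ G.Adj u v}.ncard = d)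
    (hHreg : ∀ u ∈ X, {v : V | v ∈ X ∧ H.Adj u v}.ncard = d)
    (hsame : ∀ u v : V, ¬ (u ∈ X ∧ v ∈ X) → (H.Adj u v ↔ G.Adj u v))
    {P : V → Prop} (hP : ∀ b ∈ X, ∀ b' ∈ X, P b → P b') (u : V) :
    {b : V | G.Adj u b ∧ P b}.ncard = {b : V | H.Adj u b ∧ P b}.ncard := by
  by_cases hu : u ∈ X
  swap
  · simp only [hsame u _ fun h => hu h.1]
  have inside : ({b | G.Adj u b ∧ P b} ∩ X).ncard = ({b | H.Adj u b ∧ P b} ∩ X).ncard := by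
    by_cases hex : ∃ b ∈ X, P b
    · obtain ⟨b₀, hb₀, hPb₀⟩ := hex
      have hPX : ∀ b ∈ X, P b := fun b hb => hP b₀ hb₀ b hb hPb₀
      have hcount (K : SimpleGraph V) :
          ({b | K.Adj u b ∧ P b} ∩ X) = {v : V | v ∈ X ∧ K.Adj u v} := by
        ext b
        simp only [Set.mem_inter_iff, Set.mem_ofPred_eq]
        exact ⟨fun h => ⟨h.2, h.1.1⟩, fun h => ⟨⟨h.2, hPX b h.1⟩, h.1⟩⟩
      rw [hcount, hcount, hGreg u hu, hHreg u hu]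
    · push Not at hex
      have hempty (K : SimpleGraph V) : ({b | K.Adj u b ∧ P b} ∩ X) = ∅ :=
        Set.eq_empty_of_forall_notMem fun b h => hex b h.2 h.1.2
      rw [hempty, hempty]
  have outside : {b | G.Adj u b ∧ P b} \ X = {b | H.Adj u b ∧ P b} \ X := by
    ext b
    simp only [Set.mem_sdiff, Set.mem_ofPred_eq]
    exact ⟨fun h => ⟨⟨(hsame u b fun h' => h.2 h'.2).mpr h.1.1, h.1.2⟩, h.2⟩,
      fun h => ⟨⟨(hsame u b fun h' => h.2 h'.2).mp h.1.1, h.1.2⟩, h.2⟩⟩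
  rw [← Set.ncard_inter_add_ncard_sdiff_eq_ncard _ X, inside, outside,
    Set.ncard_inter_add_ncard_sdiff_eq_ncard]

section DisjointSum

variable (G : SimpleGraph V) (H : SimpleGraph W) (P : V ⊕ W → Prop)

lemma ncard_sum_adj_inl (u : V) :
    {z | (G ⊕g H).Adj (Sum.inl u) z ∧ P z}.ncard = {b | G.Adj u b ∧ P (Sum.inl b)}.ncard := by
  have himage : {z | (G ⊕g H).Adj (Sum.inl u) z ∧ P z} =
      Sum.inl '' {b | G.Adj u b ∧ P (Sum.inl b)} := by
    ext (z | z) <;> simp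
  rw [himage, Set.ncard_image_of_injective _ Sum.inl_injective]

lemma ncard_sum_adj_inr (u : W) :
    {z | (G ⊕g H).Adj (Sum.inr u) z ∧ P z}.ncard = {b | H.Adj u b ∧ P (Sum.inr b)}.ncard := by
  have himage : {z | (G ⊕g H).Adj (Sum.inr u) z ∧ P z} =
      Sum.inr '' {b | H.Adj u b ∧ P (Sum.inr b)} := by
    ext (z | z) <;> simp
  rw [himage, Set.ncard_image_of_injective _ Sum.inr_injective]

end DisjointSum

lemma crRel_sum_iff_of_ncard_adj_eq {α : Type} {G H : SimpleGraph V} {c : V → α}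
    (hcount : ∀ (i : ℕ) (u w : V),
      {b | G.Adj u b ∧ crRel G c i b w}.ncard = {b | H.Adj u b ∧ crRel G c i b w}.ncard)
    (i : ℕ) (x y : V ⊕ V) :
    crRel (G ⊕g H) (Sum.elim c c) i x y ↔ crRel G c i (x.elim id id) (y.elim id id) := by
  induction i generalizing x y with
  | zero => cases x <;> cases y <;> rfl
  | succ i ih =>
    have hneighbours (x w : V ⊕ V) :
        {z | (G ⊕g H).Adj x z ∧ crRel (G ⊕g H) (Sum.elim c c) i z w}.ncard =
          {b | G.Adj (x.elim id id) b ∧ crRel G c i b (w.elim id id)}.ncard := by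
      cases x with
      | inl u => simp only [ncard_sum_adj_inl, ih, Sum.elim_inl, id_eq]
      | inr u => simp only [ncard_sum_adj_inr, ih, Sum.elim_inr, id_eq, hcount]
    change (_ ∧ ∀ w, _ = _) ↔ (_ ∧ ∀ w, _ = _)
    simp only [hneighbours]
    rw [ih]
    exact and_congr_right fun _ => ⟨fun h w => h (Sum.inl w), fun h w => h _⟩

theorem local_surgery_cell {V : Type} [Fintype V] (G H : SimpleGraph V) (c : V → ℕ)
    (X : Set V) (d : ℕ) (hX : IsCell G c X)
    (hGreg : ∀ u ∈ X, {v : V | v ∈ X ∧ G.Adj u v}.ncard = d)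
    (hHreg : ∀ u ∈ X, {v : V | v ∈ X ∧ H.Adj u v}.ncard = d)
    (hsame : ∀ u v : V, ¬ (u ∈ X ∧ v ∈ X) → (H.Adj u v ↔ G.Adj u v)) :
    ∀ (i : ℕ) (u : V), crRel (G ⊕g H) (Sum.elim c c) i (Sum.inl u) (Sum.inr u) := by
  have hcount (j : ℕ) (v w : V) :
      {b | G.Adj v b ∧ crRel G c j b w}.ncard = {b | H.Adj v b ∧ crRel G c j b w}.ncard :=
    ncard_adj_eq_of_regular_surgery hGreg hHreg hsame
      (fun b hb b' hb' h => crRel_trans (hX.crRel_of_mem hb' hb j) h) v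
  intro i u
  exact (crRel_sum_iff_of_ncard_adj_eq hcount i _ _).mpr (crRel_refl G c i u)

end ColorRef
end

section
/- Let m, n, c, d be natural numbers with c ≤ n, d ≤ m and mc = nd, so that there exists a bipartite graph with parts A of size m and B of size n in which every vertex of A has degree c and every vertex of B has degree d. Then any two such bipartite graphs (with the given part sizes and degrees, under isomorphisms respecting the bipartition) are isomorphic if and only if c ∈ {0, 1, n−1, n} or d ∈ {0, 1, m−1, m}. -/
/-!
The degenerate degrees are rigid: for `c = 0` the relation is empty, and for `c = 1` it is the
graph of a map `Fin m → Fin n` whose fibres all have `d` elements, which is unique up to a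
permutation of `Fin m`. Complementation and transposition give the cases `c ∈ {n - 1, n}` and
`d ∈ {0, 1, m - 1, m}`.

Otherwise write `m = g m'`, `n = g n'`, `c = n' k`, `d = m' k` with `g = gcd m n` and
`0 < k < g`; complementing if necessary, `2 k ≤ g`. Call two rows twins if they have the same
neighbourhood. Blowing up the circulant `j - i ∈ [0, k)` on `ℤ/g` into `m' × n'` blocks gives a
`(c, d)`-biregular graph in which every twin class has `m'` rows, because an interval of `ℤ/g`
has no nontrivial translation symmetry. A second `(c, d)`-biregular graph has a twin class of
another size: for `k = 1`, when `m', n' ≥ 2`, twisting one block by a transposition leaves a row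
without twins; for `k ≥ 2`, replacing the circulant by `K_{k,k}` plus the circulant on
`ℤ/(g - k)` produces a twin class of `k m'` rows.
-/

namespace ColorRef

variable {V W : Type}

section Biregular

variable {α β α' β' α'' β'' ι κ : Type*}

def IsBiregular (R : α → β → Prop) (c d : ℕ) : Prop :=
  (∀ a, {b | R a b}.ncard = c) ∧ ∀ b, {a | R a b}.ncard = d

def BipIso (R : α → β → Prop) (R' : α' → β' → Prop) : Prop :=
  ∃ (e : α ≃ α') (f : β ≃ β'), ∀ a b, R' (e a) (f b) ↔ R a b

def BiregularUnique (m n c d : ℕ) : Prop :=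
  ∀ R R' : Fin m → Fin n → Prop, IsBiregular R c d → IsBiregular R' c d → BipIso R R'

def twinClass (R : α → β → Prop) (a : α) : Set α := {a' | ∀ b, R a' b ↔ R a b}

theorem ncard_preimage_equiv (e : α ≃ β) (s : Set β) : (e ⁻¹' s).ncard = s.ncard :=
  Set.ncard_preimage_of_injective_subset_range e.injective (by simp)

theorem ncard_setOf_prod [Fintype α] [Fintype ι] (p : α → ι → Prop) :
    {q : α × ι | p q.1 q.2}.ncard = ∑ x, {a | p a x}.ncard := by
  classical
  simp only [Set.ncard_eq_toFinset_card', Set.toFinset_ofPred, Finset.card_filter]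
  exact Fintype.sum_prod_type_right _

namespace IsBiregular

variable {R : α → β → Prop} {c d : ℕ}

theorem comap (h : IsBiregular R c d) (e : α' ≃ α) (f : β' ≃ β) :
    IsBiregular (fun a b => R (e a) (f b)) c d :=
  ⟨fun a => (ncard_preimage_equiv f {b | R (e a) b}).trans (h.1 _),
    fun b => (ncard_preimage_equiv e {a | R a (f b)}).trans (h.2 _)⟩

theorem flip (h : IsBiregular R c d) : IsBiregular (flip R) d c := ⟨h.2, h.1⟩

theorem compl [Finite α] [Finite β] (h : IsBiregular R c d) :
    IsBiregular (fun a b => ¬ R a b) (Nat.card β - c) (Nat.card α - d) :=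
  ⟨fun a => by rw [← h.1 a]; exact Set.ncard_compl _,
    fun b => by rw [← h.2 b]; exact Set.ncard_compl _⟩

theorem not_of_zero [Finite β] (h : IsBiregular R 0 d) (a : α) (b : β) : ¬ R a b :=
  Set.eq_empty_iff_forall_notMem.mp ((Set.ncard_eq_zero).mp (h.1 a)) b

theorem exists_fun (h : IsBiregular R 1 d) : ∃ φ : α → β, ∀ a b, R a b ↔ φ a = b := by
  choose φ hφ using fun a => Set.ncard_eq_one.mp (h.1 a)
  exact ⟨φ, fun a b => (Set.ext_iff.mp (hφ a) b).trans eq_comm⟩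

end IsBiregular

theorem BipIso.symm {R : α → β → Prop} {R' : α' → β' → Prop} (h : BipIso R R') : BipIso R' R := by
  obtain ⟨e, f, h⟩ := h
  exact ⟨e.symm, f.symm, fun a b => by simpa using (h (e.symm a) (f.symm b)).symm⟩

theorem BipIso.trans {R : α → β → Prop} {R' : α' → β' → Prop} {R'' : α'' → β'' → Prop}
    (h : BipIso R R') (h' : BipIso R' R'') : BipIso R R'' := by
  obtain ⟨e, f, h⟩ := h
  obtain ⟨e', f', h'⟩ := h'
  exact ⟨e.trans e', f.trans f', fun a b => (h' _ _).trans (h a b)⟩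

theorem bipIso_comap (R : α → β → Prop) (e : α' ≃ α) (f : β' ≃ β) :
    BipIso (fun a b => R (e a) (f b)) R :=
  ⟨e, f, fun _ _ => Iff.rfl⟩

theorem BipIso.ncard_twinClass {R : α → β → Prop} {R' : α' → β' → Prop} (h : BipIso R R') {k : ℕ}
    (hR : ∀ a, (twinClass R a).ncard = k) (a' : α') : (twinClass R' a').ncard = k := by
  obtain ⟨e, f, h⟩ := h
  obtain ⟨a, rfl⟩ := e.surjective a'
  have : e ⁻¹' twinClass R' (e a) = twinClass R a := by
    ext a''
    simp only [twinClass, Set.mem_preimage, Set.mem_ofPred_eq, f.surjective.forall, h]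
  rw [← hR a, ← this, ncard_preimage_equiv]

theorem bipIso_of_fiber_card {φ : α → β} {φ' : α' → β} [Finite α] [Finite α']
    (h : ∀ b, Nat.card {a // φ a = b} = Nat.card {a // φ' a = b}) :
    BipIso (fun a b => φ a = b) (fun a b => φ' a = b) :=
  ⟨Equiv.ofFiberEquiv fun b => (Finite.card_eq.mp (h b)).some, Equiv.refl β,
    fun a b => by dsimp only [Equiv.refl_apply]; rw [Equiv.ofFiberEquiv_map (g := φ')]⟩

namespace BiregularUnique

variable {m n c d : ℕ}

theorem bipIso (hU : BiregularUnique m n c d) [Fintype α] [Fintype β] [Fintype α'] [Fintype β']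
    {R : α → β → Prop} {R' : α' → β' → Prop} (hR : IsBiregular R c d) (hR' : IsBiregular R' c d)
    (hα : Fintype.card α = m) (hβ : Fintype.card β = n) (hα' : Fintype.card α' = m)
    (hβ' : Fintype.card β' = n) : BipIso R R' := by
  let e := (Fintype.equivFinOfCardEq hα).symm
  let f := (Fintype.equivFinOfCardEq hβ).symm
  let e' := (Fintype.equivFinOfCardEq hα').symm
  let f' := (Fintype.equivFinOfCardEq hβ').symm
  exact (bipIso_comap R e f).symm.trans
    ((hU _ _ (hR.comap e f) (hR'.comap e' f')).trans (bipIso_comap R' e' f'))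

theorem compl (hU : BiregularUnique m n c d) (hc : c ≤ n) (hd : d ≤ m) :
    BiregularUnique m n (n - c) (m - d) := by
  intro R R' hR hR'
  have hcompl {T : Fin m → Fin n → Prop} (hT : IsBiregular T (n - c) (m - d)) :
      IsBiregular (fun a b => ¬ T a b) c d := by
    simpa [Nat.sub_sub_self hc, Nat.sub_sub_self hd] using hT.compl
  obtain ⟨e, f, h⟩ := hU _ _ (hcompl hR) (hcompl hR')
  exact ⟨e, f, fun a b => not_iff_not.mp (h a b)⟩

theorem flip (hU : BiregularUnique n m d c) : BiregularUnique m n c d := by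
  intro R R' hR hR'
  obtain ⟨f, e, h⟩ := hU _ _ hR.flip hR'.flip
  exact ⟨e, f, fun a b => h b a⟩

end BiregularUnique

theorem biregularUnique_of_le_one {m n c d : ℕ} (hc : c ≤ 1) : BiregularUnique m n c d := by
  intro R R' hR hR'
  interval_cases c
  · exact ⟨Equiv.refl _, Equiv.refl _,
      fun a b => iff_of_false (hR'.not_of_zero _ _) (hR.not_of_zero a b)⟩
  · obtain ⟨φ, hφ⟩ := hR.exists_fun
    obtain ⟨φ', hφ'⟩ := hR'.exists_fun
    have hfib {T : Fin m → Fin n → Prop} {ψ : Fin m → Fin n} (hT : IsBiregular T 1 d)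
        (hψ : ∀ a b, T a b ↔ ψ a = b) (b : Fin n) : Nat.card {a // ψ a = b} = d := by
      rw [← hT.2 b, ← Nat.card_coe_set_eq]
      simp only [hψ]
      rfl
    obtain ⟨e, f, h⟩ := bipIso_of_fiber_card (φ := φ) (φ' := φ') fun b =>
      (hfib hR hφ b).trans (hfib hR' hφ' b).symm
    exact ⟨e, f, fun a b => by simpa [hφ, hφ'] using h a b⟩

def blockRel (S : ι → κ → α → β → Prop) : α × ι → β × κ → Prop :=
  fun a b => S a.2 b.2 a.1 b.1

theorem IsBiregular.blockRel [Fintype α] [Fintype β] [Fintype ι] [Fintype κ]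
    {S : ι → κ → α → β → Prop} {c d : ℕ} (h : ∀ x y, IsBiregular (S x y) c d) :
    IsBiregular (blockRel S) (Fintype.card κ * c) (Fintype.card ι * d) := by
  refine ⟨fun a => ?_, fun b => ?_⟩
  · exact (ncard_setOf_prod fun b y => S a.2 y a.1 b).trans (by simp [(h _ _).1])
  · exact (ncard_setOf_prod fun a x => S x b.2 a b.1).trans (by simp [(h _ _).2])

theorem twinClass_blockRel_const [Nonempty κ] (R : α → β → Prop) (a : α) (x : ι) :
    twinClass (blockRel fun (_ : ι) (_ : κ) => R) (a, x) = twinClass R a ×ˢ Set.univ := by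
  ext ⟨a', x'⟩
  simp [twinClass, blockRel]

def circulant (g k : ℕ) (i j : ZMod g) : Prop := (j - i).val < k

theorem ncard_setOf_val_lt {g k : ℕ} [NeZero g] (hk : k ≤ g) :
    {t : ZMod g | t.val < k}.ncard = k := by
  have : ZMod.val '' {t : ZMod g | t.val < k} = Set.Iio k := by
    ext l
    refine ⟨fun ⟨t, ht, htl⟩ => htl ▸ ht, fun hl => ⟨l, ?_, ?_⟩⟩ <;>
      simp only [Set.mem_ofPred_eq, ZMod.val_cast_of_lt (lt_of_lt_of_le hl hk)]
    exact hl
  rw [← Set.ncard_image_of_injective _ (ZMod.val_injective g), this, Set.ncard_Iio_nat]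

theorem isBiregular_circulant {g k : ℕ} [NeZero g] (hk : k ≤ g) :
    IsBiregular (circulant g k) k k :=
  ⟨fun i => (ncard_preimage_equiv (Equiv.subRight i) _).trans (ncard_setOf_val_lt hk),
    fun j => (ncard_preimage_equiv (Equiv.subLeft j) _).trans (ncard_setOf_val_lt hk)⟩

theorem circulant_and_not_circulant_sub_one_iff {g k : ℕ} (hk : 0 < k) (hkg : k < g)
    {i j : ZMod g} : circulant g k i j ∧ ¬ circulant g k i (j - 1) ↔ j = i := by
  have : NeZero g := ⟨by omega⟩
  have h1 : (1 : ZMod g).val = 1 := by rw [ZMod.val_one_eq_one_mod, Nat.mod_eq_of_lt (by omega)]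
  have h1' : (1 : ZMod g) ≠ 0 := fun h => by simp [h] at h1
  unfold circulant
  rw [sub_right_comm]
  constructor
  · rintro ⟨hin, hout⟩
    by_contra hne
    have : (j - i).val ≠ 0 := by rwa [ne_eq, ZMod.val_eq_zero, sub_eq_zero]
    rw [ZMod.val_sub (by omega), h1] at hout
    omega
  · rintro rfl
    simp [ZMod.neg_val, h1', h1]
    omega

theorem twinClass_circulant {g k : ℕ} (hk : 0 < k) (hkg : k < g) (i : ZMod g) :
    twinClass (circulant g k) i = {i} := by
  ext i'
  refine ⟨fun h => ?_, fun h => h ▸ fun _ => Iff.rfl⟩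
  have := (circulant_and_not_circulant_sub_one_iff hk hkg (i := i') (j := i')).mpr rfl
  rwa [h, h, circulant_and_not_circulant_sub_one_iff hk hkg] at this

theorem ncard_twinClass_blockRel_circulant {g k : ℕ} (hk : 0 < k) (hkg : k < g) [Nonempty κ]
    (a : ZMod g × ι) :
    (twinClass (blockRel fun (_ : ι) (_ : κ) => circulant g k) a).ncard = Nat.card ι := by
  rw [twinClass_blockRel_const, twinClass_circulant hk hkg, Set.ncard_prod, Set.ncard_singleton,
    Set.ncard_univ, one_mul]

def swapBlockRel [DecidableEq α] [DecidableEq ι] [DecidableEq κ] (R : α → β → Prop) (a₀ a₁ : α)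
    (x₀ : ι) (y₀ : κ) : α × ι → β × κ → Prop :=
  blockRel fun x y a b => R ((if x = x₀ ∧ y = y₀ then Equiv.swap a₀ a₁ else Equiv.refl α) a) b

theorem IsBiregular.swapBlockRel [Fintype α] [Fintype β] [Fintype ι] [Fintype κ] [DecidableEq α]
    [DecidableEq ι] [DecidableEq κ] {R : α → β → Prop} {c d : ℕ} (h : IsBiregular R c d)
    (a₀ a₁ : α) (x₀ : ι) (y₀ : κ) :
    IsBiregular (swapBlockRel R a₀ a₁ x₀ y₀) (Fintype.card κ * c) (Fintype.card ι * d) :=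
  IsBiregular.blockRel fun _ _ => h.comap _ (Equiv.refl β)

theorem twinClass_swapBlockRel [DecidableEq α] [DecidableEq ι] [DecidableEq κ] {R : α → β → Prop}
    (hR : ∀ a, twinClass R a = {a}) {a₀ a₁ : α} (ha : a₀ ≠ a₁) (x₀ : ι) {y₀ y₁ : κ}
    (hy : y₁ ≠ y₀) : twinClass (swapBlockRel R a₀ a₁ x₀ y₀) (a₀, x₀) = {(a₀, x₀)} := by
  ext ⟨a, x⟩
  simp only [Set.mem_singleton_iff, Prod.mk.injEq]
  refine ⟨fun h => ?_, fun ⟨ha, hx⟩ => ha ▸ hx ▸ fun _ => Iff.rfl⟩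
  obtain rfl : a = a₀ := by
    have : a ∈ twinClass R a₀ := fun b => by simpa [swapBlockRel, blockRel, hy] using h (b, y₁)
    rwa [hR] at this
  refine ⟨rfl, by_contra fun hx => ha ?_⟩
  have : a ∈ twinClass R a₁ := fun b => by simpa [swapBlockRel, blockRel, hx] using h (b, y₀)
  rwa [hR] at this

theorem isBiregular_top :
    IsBiregular (fun (_ : α) (_ : β) => True) (Nat.card β) (Nat.card α) :=
  ⟨fun _ => by simp, fun _ => by simp⟩

theorem IsBiregular.sumLiftRel {R₁ : α → β → Prop} {R₂ : α' → β' → Prop} {c d : ℕ}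
    (h₁ : IsBiregular R₁ c d) (h₂ : IsBiregular R₂ c d) : IsBiregular (Sum.LiftRel R₁ R₂) c d := by
  refine ⟨Sum.rec (fun a => ?_) (fun a => ?_), Sum.rec (fun b => ?_) (fun b => ?_)⟩
  · rw [show {b | Sum.LiftRel R₁ R₂ (.inl a) b} = .inl '' {b | R₁ a b} by ext (b | b) <;> simp,
      Set.ncard_image_of_injective _ Sum.inl_injective, h₁.1 a]
  · rw [show {b | Sum.LiftRel R₁ R₂ (.inr a) b} = .inr '' {b | R₂ a b} by ext (b | b) <;> simp,
      Set.ncard_image_of_injective _ Sum.inr_injective, h₂.1 a]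
  · rw [show {a | Sum.LiftRel R₁ R₂ a (.inl b)} = .inl '' {a | R₁ a b} by ext (a | a) <;> simp,
      Set.ncard_image_of_injective _ Sum.inl_injective, h₁.2 b]
  · rw [show {a | Sum.LiftRel R₁ R₂ a (.inr b)} = .inr '' {a | R₂ a b} by ext (a | a) <;> simp,
      Set.ncard_image_of_injective _ Sum.inr_injective, h₂.2 b]

theorem range_inl_subset_twinClass_liftRel (R : α' → β' → Prop) (a : α) :
    Set.range Sum.inl ⊆ twinClass (Sum.LiftRel (fun (_ : α) (_ : β) => True) R) (Sum.inl a) := by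
  rintro _ ⟨a', rfl⟩ (b | b) <;> simp

theorem BiregularUnique.ncard_twinClass {m n c d k : ℕ} (hU : BiregularUnique m n c d)
    [Fintype α] [Fintype β] [Fintype α'] [Fintype β'] {R : α → β → Prop} {R' : α' → β' → Prop}
    (hR : IsBiregular R c d) (hR' : IsBiregular R' c d) (hα : Fintype.card α = m)
    (hβ : Fintype.card β = n) (hα' : Fintype.card α' = m) (hβ' : Fintype.card β' = n)
    (hk : ∀ a, (twinClass R a).ncard = k) (a' : α') : (twinClass R' a').ncard = k :=
  (hU.bipIso hR hR' hα hβ hα' hβ').ncard_twinClass hk a'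

theorem not_biregularUnique_of_swap {g m' n' k : ℕ} (hk : 0 < k) (hkg : k < g) (hm' : 2 ≤ m')
    (hn' : 2 ≤ n') : ¬ BiregularUnique (g * m') (g * n') (n' * k) (m' * k) := by
  intro hU
  have : NeZero g := ⟨by omega⟩
  have : NeZero n' := ⟨by omega⟩
  have hR := isBiregular_circulant (g := g) hkg.le
  have hA := IsBiregular.blockRel (ι := Fin m') (κ := Fin n') fun _ _ => hR
  have hB := hR.swapBlockRel 0 1 (⟨0, by omega⟩ : Fin m') (⟨0, by omega⟩ : Fin n')
  simp only [Fintype.card_fin] at hA hB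
  have : Fact (1 < g) := ⟨by omega⟩
  have h01 : (0 : ZMod g) ≠ 1 := zero_ne_one
  have hclass := hU.ncard_twinClass hA hB (by simp) (by simp) (by simp) (by simp)
    (fun a => (ncard_twinClass_blockRel_circulant hk hkg a).trans (Nat.card_fin m'))
    (0, ⟨0, by omega⟩)
  rw [twinClass_swapBlockRel (twinClass_circulant hk hkg) h01 _ (y₁ := ⟨1, by omega⟩)
    (by simp [Fin.ext_iff]), Set.ncard_singleton] at hclass
  omega

theorem not_biregularUnique_of_sum {g m' n' k : ℕ} (hk : 2 ≤ k) (hkg : 2 * k ≤ g) (hm' : 0 < m')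
    (hn' : 0 < n') : ¬ BiregularUnique (g * m') (g * n') (n' * k) (m' * k) := by
  intro hU
  have : NeZero g := ⟨by omega⟩
  have : NeZero (g - k) := ⟨by omega⟩
  have : NeZero n' := ⟨by omega⟩
  have hA := IsBiregular.blockRel (ι := Fin m') (κ := Fin n')
    fun _ _ => isBiregular_circulant (g := g) (k := k) (by omega)
  have hK : IsBiregular (fun (_ : Fin k) (_ : Fin k) => True) k k := by
    simpa using isBiregular_top (α := Fin k) (β := Fin k)
  have hB := IsBiregular.blockRel (ι := Fin m') (κ := Fin n')
    fun _ _ => hK.sumLiftRel (isBiregular_circulant (g := g - k) (k := k) (by omega))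
  simp only [Fintype.card_fin] at hA hB
  have hcard (l : ℕ) : Fintype.card ((Fin k ⊕ ZMod (g - k)) × Fin l) = g * l := by
    simp only [Fintype.card_prod, Fintype.card_sum, Fintype.card_fin, ZMod.card]
    congr 1; omega
  have hclass := hU.ncard_twinClass hA hB (by simp) (by simp) (hcard m') (hcard n')
    (fun a => (ncard_twinClass_blockRel_circulant (by omega) (by omega) a).trans (Nat.card_fin m'))
    (.inl ⟨0, by omega⟩, ⟨0, hm'⟩)
  rw [twinClass_blockRel_const, Set.ncard_prod, Set.ncard_univ, Nat.card_fin] at hclass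
  have hle := Set.ncard_le_ncard
    (range_inl_subset_twinClass_liftRel (β := Fin k) (circulant (g - k) k) (⟨0, by omega⟩ : Fin k))
  rw [Set.ncard_range_of_injective Sum.inl_injective, Nat.card_fin] at hle
  nlinarith

theorem exists_eq_mul_of_mul_eq_mul {m n c d : ℕ} (hm : 0 < m) (hn : 0 < n) (h : m * c = n * d) :
    ∃ g m' n' k, m = g * m' ∧ n = g * n' ∧ c = n' * k ∧ d = m' * k := by
  obtain ⟨g, m', n', hg, hcop, rfl, rfl⟩ := Nat.exists_coprime' (Nat.gcd_pos_of_pos_left n hm)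
  have h' : m' * c = n' * d := by
    apply Nat.eq_of_mul_eq_mul_right hg
    linarith
  obtain ⟨k, rfl⟩ := hcop.symm.dvd_of_dvd_mul_left ⟨d, h'⟩
  have hn' : 0 < n' := Nat.pos_of_ne_zero fun h0 => by simp [h0] at hn
  refine ⟨g, m', n', k, mul_comm _ _, mul_comm _ _, rfl, ?_⟩
  apply Nat.eq_of_mul_eq_mul_left hn'
  linarith

theorem not_biregularUnique_of_two_mul_le {g m' n' k : ℕ} (hk : 0 < k) (hkg : 2 * k ≤ g)
    (hc : 2 ≤ n' * k) (hd : 2 ≤ m' * k) :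
    ¬ BiregularUnique (g * m') (g * n') (n' * k) (m' * k) := by
  obtain rfl | hk2 : k = 1 ∨ 2 ≤ k := by omega
  · exact not_biregularUnique_of_swap hk (by omega) (by simpa using hd) (by simpa using hc)
  · exact not_biregularUnique_of_sum hk2 hkg (Nat.pos_of_ne_zero fun h0 => by simp [h0] at hd)
      (Nat.pos_of_ne_zero fun h0 => by simp [h0] at hc)

theorem not_biregularUnique {m n c d : ℕ} (h : m * c = n * d) (hc : 2 ≤ c) (hcn : c + 2 ≤ n)
    (hd : 2 ≤ d) (hdm : d + 2 ≤ m) : ¬ BiregularUnique m n c d := by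
  obtain ⟨g, m', n', k, rfl, rfl, rfl, rfl⟩ := exists_eq_mul_of_mul_eq_mul (by omega) (by omega) h
  have hk : 0 < k := Nat.pos_of_ne_zero fun h0 => by simp [h0] at hc
  have hkg : k < g := by nlinarith
  rcases le_or_gt (2 * k) g with hkg2 | hkg2
  · exact not_biregularUnique_of_two_mul_le hk hkg2 hc hd
  · intro hU
    have hn : g * n' - n' * k = n' * (g - k) := by rw [Nat.mul_sub, mul_comm]
    have hm : g * m' - m' * k = m' * (g - k) := by rw [Nat.mul_sub, mul_comm]
    have hU' := hU.compl (by omega) (by omega)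
    rw [hn, hm] at hU'
    exact not_biregularUnique_of_two_mul_le (by omega) (by omega) (by omega) (by omega) hU'

theorem biregularUnique_of_degree {m n c d : ℕ} (hc : c ≤ n) (hd : d ≤ m)
    (h : c ≤ 1 ∨ n ≤ c + 1 ∨ d ≤ 1 ∨ m ≤ d + 1) : BiregularUnique m n c d := by
  rcases h with h | h | h | h
  · exact biregularUnique_of_le_one h
  · simpa [Nat.sub_sub_self hc, Nat.sub_sub_self hd] using
      (biregularUnique_of_le_one (m := m) (n := n) (c := n - c) (d := m - d) (by omega)).compl
        (by omega) (by omega)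
  · exact (biregularUnique_of_le_one h).flip
  · simpa [Nat.sub_sub_self hc, Nat.sub_sub_self hd] using
      (biregularUnique_of_le_one (m := n) (n := m) (c := m - d) (d := n - c) (by omega)).compl
        (by omega) (by omega) |>.flip

end Biregular

theorem biregular_unigraph_iff (m n c d : ℕ) (hc : c ≤ n) (hd : d ≤ m)
    (h : m * c = n * d) :
    (∀ R R' : Fin m → Fin n → Prop,
        (∀ a, {b : Fin n | R a b}.ncard = c) → (∀ b, {a : Fin m | R a b}.ncard = d) →
        (∀ a, {b : Fin n | R' a b}.ncard = c) → (∀ b, {a : Fin m | R' a b}.ncard = d) →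
        ∃ (e : Equiv.Perm (Fin m)) (f : Equiv.Perm (Fin n)),
          ∀ a b, R' (e a) (f b) ↔ R a b) ↔
      (c = 0 ∨ c = 1 ∨ c = n - 1 ∨ c = n ∨ d = 0 ∨ d = 1 ∨ d = m - 1 ∨ d = m) := by
  constructor
  · intro hU
    by_contra hcd
    exact not_biregularUnique h (by omega) (by omega) (by omega) (by omega)
      fun R R' hR hR' => hU R R' hR.1 hR.2 hR'.1 hR'.2
  · intro hcd R R' h₁ h₂ h₃ h₄
    exact biregularUnique_of_degree hc hd (by omega) R R' ⟨h₁, h₂⟩ ⟨h₃, h₄⟩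

end ColorRef
end

section
/- Every Godsil graph is a Tinhofer graph: if every equitable partition of the vertex set of a finite simple graph G is the orbit partition of some subgroup of Aut(G), then Tinhofer's individualization-refinement algorithm gives the correct isomorphism answer on input (G, H) for every graph H and all possible choices of individualized vertices. -/
namespace ColorRef

variable {V W : Type}

/-!
If `G ≅ H`, some isomorphism maps every individualized vertex of `G` to its partner in `H`,
at every stage of the algorithm. Indeed, the stable coloring of `G ⊕g H` restricted to `G` is
an equitable partition, hence, `G` being Godsil, the orbit partition of a group of automorphisms
of `G`. These automorphisms fix the individualized vertices, which carry unique colors, so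
precomposing a compatible isomorphism `φ` with one sending the next individualized `u` to
`φ⁻¹ v`, `v` its partner, gives a compatible isomorphism for the longer run. A compatible isomorphism is itself a color-preserving automorphism of
`G ⊕g H` (swapping the sides), so it maps every vertex to one of the same stable color: the color
multisets agree, and once all classes are singletons the color-matching map is that isomorphism.
Conversely, the answer "isomorphic" is always correct, the color-matching bijection then being an
isomorphism by definition.
-/

section ColorRefinement

variable {U α : Type} {G : SimpleGraph U} {c : U → α}

lemma crRel_equivalence : ∀ i, Equivalence (crRel G c i)
  | 0 => ⟨fun _ => rfl, Eq.symm, Eq.trans⟩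
  | i + 1 =>
    have h : Equivalence (crRel G c i) := crRel_equivalence i
    ⟨fun u => ⟨h.refl u, fun _ => rfl⟩,
      fun huv => ⟨h.symm huv.1, fun w => (huv.2 w).symm⟩,
      fun huv hvw => ⟨h.trans huv.1 hvw.1, fun w => (huv.2 w).trans (hvw.2 w)⟩⟩

lemma stableRel_equivalence : Equivalence (stableRel G c) :=
  ⟨fun u i => (crRel_equivalence i).refl u,
    fun h i => (crRel_equivalence i).symm (h i),
    fun h h' i => (crRel_equivalence i).trans (h i) (h' i)⟩

lemma crRel_antitone : Antitone (crRel G c) :=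
  antitone_nat_of_succ_le fun _ _ _ h => h.1

lemma exists_forall_ge_crRel_eq_stableRel [Finite U] :
    ∃ N, ∀ m ≥ N, crRel G c m = stableRel G c := by
  obtain ⟨N, hN⟩ := WellFoundedLT.antitone_chain_condition (crRel_antitone (G := G) (c := c))
  refine ⟨N, fun m hm => funext₂ fun u v => propext ⟨fun h i => ?_, fun h => h m⟩⟩
  rcases le_total i m with hi | hi
  · exact crRel_antitone hi u v h
  · rwa [← hN i (hm.trans hi), hN m hm]

lemma stableRel_equitable [Finite U] : Equitable G (stableRel G c) := by
  obtain ⟨N, hN⟩ := exists_forall_ge_crRel_eq_stableRel (G := G) (c := c)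
  intro u v w huv
  simpa only [hN N le_rfl] using (huv (N + 1)).2 w

lemma crRel_apply_self (Φ : G ≃g G) (hc : ∀ x, c (Φ x) = c x) : ∀ i x, crRel G c i x (Φ x)
  | 0, x => (hc x).symm
  | i + 1, x => by
    have hR : Equivalence (crRel G c i) := crRel_equivalence i
    refine ⟨crRel_apply_self Φ hc i x, fun w => ?_⟩
    have hΦ : ∀ a, crRel G c i (Φ a) w ↔ crRel G c i a w := fun a =>
      ⟨hR.trans (crRel_apply_self Φ hc i a), hR.trans (hR.symm (crRel_apply_self Φ hc i a))⟩
    rw [← Set.ncard_image_of_injective _ Φ.injective]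
    congr 1
    ext b
    refine ⟨?_, fun hb => ⟨Φ.symm b, ?_, Φ.apply_symm_apply b⟩⟩
    · rintro ⟨a, ⟨hxa, haw⟩, rfl⟩
      exact ⟨Φ.map_adj_iff.mpr hxa, (hΦ a).mpr haw⟩
    · exact ⟨Φ.map_adj_iff.mp (by simpa using hb.1), (hΦ _).mp (by simpa using hb.2)⟩

lemma stableRel_apply_self (Φ : G ≃g G) (hc : ∀ x, c (Φ x) = c x) (x : U) :
    stableRel G c x (Φ x) :=
  fun i => crRel_apply_self Φ hc i x

end ColorRefinement

lemma Equitable.sum_inl {V W : Type} {G : SimpleGraph V} {H : SimpleGraph W}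
    {r : V ⊕ W → V ⊕ W → Prop} (hr : Equitable (G ⊕g H) r) :
    Equitable G (fun u v => r (.inl u) (.inl v)) := by
  have hcard : ∀ z w, {a : V | G.Adj z a ∧ r (.inl a) (.inl w)}.ncard =
      {x | (G ⊕g H).Adj (.inl z) x ∧ r x (.inl w)}.ncard := fun z w =>
    Set.ncard_preimage_of_injective_subset_range
      (s := {x | (G ⊕g H).Adj (.inl z) x ∧ r x (.inl w)}) Sum.inl_injective <| by
      rintro (a | b) ⟨hadj, -⟩
      exacts [⟨a, rfl⟩, absurd hadj Bool.false_ne_true]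
  intro u v w huv
  simp only [hcard]
  exact hr _ _ _ huv

lemma findIdx?_congr {β : Type} {p q : β → Bool} :
    ∀ {l : List β}, (∀ x ∈ l, p x = q x) → l.findIdx? p = l.findIdx? q
  | [], _ => rfl
  | x :: xs, h => by
    rw [List.findIdx?_cons, List.findIdx?_cons, h x List.mem_cons_self,
      findIdx?_congr fun y hy => h y (List.mem_cons_of_mem x hy)]

section Tinhofer

variable {V W : Type} {G : SimpleGraph V} {H : SimpleGraph W}

def sumSwapIso (φ : G ≃g H) : G ⊕g H ≃g G ⊕g H :=
  (SimpleGraph.Iso.sumCongr φ φ.symm).trans SimpleGraph.Iso.sumComm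

def IsoCompatible (φ : G ≃g H) (F : List (V × W)) : Prop :=
  ∀ p ∈ F, φ p.1 = p.2

lemma tinColor_sumSwapIso {φ : G ≃g H} {F : List (V × W)} (hφ : IsoCompatible φ F)
    (x : V ⊕ W) : tinColor F (sumSwapIso φ x) = tinColor F x := by
  classical
  have hpair : ∀ p ∈ F, ∀ u, p.2 = φ u ↔ p.1 = u := fun p hp u => by
    rw [← hφ p hp, φ.apply_eq_iff_eq]
  rcases x with u | v
  · exact findIdx?_congr fun p hp => decide_eq_decide.mpr (hpair p hp u)
  · refine findIdx?_congr fun p hp => decide_eq_decide.mpr ?_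
    simpa using (hpair p hp (φ.symm v)).symm

lemma tinRel_inl_inr_apply {φ : G ≃g H} {F : List (V × W)} (hφ : IsoCompatible φ F) (u : V) :
    tinRel G H F (.inl u) (.inr (φ u)) :=
  stableRel_apply_self (sumSwapIso φ) (tinColor_sumSwapIso hφ) (.inl u)

lemma eq_of_tinColor_inl_eq {F : List (V × W)} {a b : V} (hb : ∃ p ∈ F, p.1 = b)
    (h : tinColor F (.inl a) = tinColor F (.inl b)) : a = b := by
  classical
  obtain ⟨p, hp, rfl⟩ := hb
  obtain ⟨j, hj⟩ : ∃ j, F.findIdx? (fun q => decide (q.1 = p.1)) = some j :=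
    Option.ne_none_iff_exists'.mp fun hnone =>
      by simpa using List.findIdx?_eq_none_iff.mp hnone p hp
  have ha : F.findIdx? (fun q => decide (q.1 = a)) = some j := h.trans hj
  obtain ⟨_, hja, -⟩ := List.findIdx?_eq_some_iff_getElem.mp ha
  obtain ⟨_, hjb, -⟩ := List.findIdx?_eq_some_iff_getElem.mp hj
  simp only [decide_eq_true_eq] at hja hjb
  rw [← hja, hjb]

lemma IsoCompatible.exists_append [Finite V] [Finite W] (hG : Godsil G) {φ : G ≃g H}
    {F : List (V × W)} (hφ : IsoCompatible φ F) {u : V} {v : W}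
    (huv : tinRel G H F (.inl u) (.inr v)) :
    ∃ ψ : G ≃g H, IsoCompatible ψ (F ++ [(u, v)]) := by
  have hR := stableRel_equivalence (G := G ⊕g H) (c := tinColor F)
  obtain ⟨S, hSaut, hSorb⟩ := hG _ (hR.comap Sum.inl) (Equitable.sum_inl stableRel_equitable)
  have hvu : tinRel G H F (.inl u) (.inl (φ.symm v)) := by
    refine hR.trans huv (hR.symm ?_)
    simpa [tinRel] using tinRel_inl_inr_apply hφ (φ.symm v)
  obtain ⟨σ, hσS, hσu⟩ := (hSorb _ _).mp hvu
  have hfix : ∀ p ∈ F, σ p.1 = p.1 := fun p hp =>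
    eq_of_tinColor_inl_eq ⟨p, hp, rfl⟩ ((hSorb _ _).mpr ⟨σ, hσS, rfl⟩ 0).symm
  let σ' : G ≃g G := ⟨σ, hSaut σ hσS _ _⟩
  refine ⟨σ'.trans φ, fun p hp => ?_⟩
  rcases List.mem_append.mp hp with hp | hp
  · exact (congrArg φ (hfix p hp)).trans (hφ p hp)
  · obtain rfl := List.mem_singleton.mp hp
    exact (congrArg φ hσu).trans (φ.apply_symm_apply v)

lemma exists_isoCompatible_of_validRun [Finite V] [Finite W] (hG : Godsil G) (φ : G ≃g H)
    {F : List (V × W)} (hrun : ValidRun G H F) : ∃ ψ : G ≃g H, IsoCompatible ψ F := by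
  suffices ∀ n ≤ F.length, ∃ ψ : G ≃g H, IsoCompatible ψ (F.take n) by
    simpa using this F.length le_rfl
  intro n
  induction n with
  | zero => exact fun _ => ⟨φ, by simp [IsoCompatible]⟩
  | succ n ih =>
    intro hn
    obtain ⟨ψ, hψ⟩ := ih (n.le_succ.trans hn)
    rw [List.take_succ_eq_append_getElem hn]
    exact hψ.exists_append hG (hrun ⟨n, hn⟩).2.1

lemma tinIndist_of_isoCompatible {φ : G ≃g H} {F : List (V × W)} (hφ : IsoCompatible φ F) :
    tinIndist G H F := by
  have hR := stableRel_equivalence (G := G ⊕g H) (c := tinColor F)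
  intro w
  have hpre : {u : V | tinRel G H F (.inl u) w} = φ ⁻¹' {v : W | tinRel G H F (.inr v) w} :=
    Set.ext fun u => ⟨hR.trans (hR.symm (tinRel_inl_inr_apply hφ u)),
      hR.trans (tinRel_inl_inr_apply hφ u)⟩
  rw [hpre, Set.ncard_preimage_of_injective_subset_range φ.injective
    (by simp [φ.surjective.range_eq])]

lemma tinIndist.nonempty_iff [Finite V] [Finite W] {F : List (V × W)}
    (hind : tinIndist G H F) (w : V ⊕ W) :
    {u : V | tinRel G H F (.inl u) w}.Nonempty ↔ {v : W | tinRel G H F (.inr v) w}.Nonempty := by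
  rw [← Set.ncard_pos (Set.toFinite _), hind w, Set.ncard_pos (Set.toFinite _)]

lemma nonempty_iso_of_tinOutputIso [Finite V] [Finite W] {F : List (V × W)}
    (hout : TinOutputIso G H F) : Nonempty (G ≃g H) := by
  obtain ⟨hind, ⟨hsingG, hsingH⟩, hadj⟩ := hout
  have hR := stableRel_equivalence (G := G ⊕g H) (c := tinColor F)
  have hpartner (u : V) : ∃ v, tinRel G H F (.inl u) (.inr v) :=
    ((hind.nonempty_iff (.inl u)).mp ⟨u, hR.refl _⟩).imp fun _ => hR.symm
  choose f hf using hpartner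
  have hbij : f.Bijective := by
    refine ⟨fun a b hab => hsingG a b (hR.trans (hf a) (hab ▸ hR.symm (hf b))), fun v => ?_⟩
    obtain ⟨u, hu⟩ := (hind.nonempty_iff (.inr v)).mpr ⟨v, hR.refl _⟩
    exact ⟨u, hsingH _ _ (hR.trans (hR.symm (hf u)) hu)⟩
  exact ⟨⟨Equiv.ofBijective f hbij, fun {a b} => (hadj a b (f a) (f b) (hf a) (hf b)).symm⟩⟩

lemma tinOutputIso_of_isoCompatible {φ : G ≃g H} {F : List (V × W)} (hφ : IsoCompatible φ F)
    (hterm : TinTerminal G H F) : TinOutputIso G H F := by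
  have hR := stableRel_equivalence (G := G ⊕g H) (c := tinColor F)
  have hind := tinIndist_of_isoCompatible hφ
  have hsing : AllSingletons G H F := hterm.resolve_left (not_not_intro hind)
  have hpartner {u : V} {v : W} (h : tinRel G H F (.inl u) (.inr v)) : v = φ u :=
    hsing.2 _ _ (hR.trans (hR.symm h) (tinRel_inl_inr_apply hφ u))
  refine ⟨hind, hsing, fun u u' v v' huv hu'v' => ?_⟩
  rw [hpartner huv, hpartner hu'v', φ.map_adj_iff]

end Tinhofer

theorem godsil_tinhofer {V : Type} [Fintype V] (G : SimpleGraph V)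
    (h : Godsil G) : Tinhofer G := by
  intro W _ H F hrun hterm
  refine ⟨nonempty_iso_of_tinOutputIso, fun ⟨φ⟩ => ?_⟩
  obtain ⟨ψ, hψ⟩ := exists_isoCompatible_of_validRun h φ hrun
  exact tinOutputIso_of_isoCompatible hψ hterm

end ColorRef
end
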